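/- Let G be a group acting on a Polish space X that is σ-compact, second countable, and has no isolated points, via an action α all of whose orbits are dense and with α(g,·) continuous for each g. Then cov_α = cov*_α, where cov_α is the least cardinality of a set Q ⊆ G such that α(Q,C) = X for some closed nowhere dense C ⊆ X, and cov*_α is the analogous cardinal with C replaced by a meagre set. -/

import Mathlib

/-!
Every meagre set `M` lies in countably many translates of one closed nowhere dense set `C`.
Cover `M` by compact nowhere dense sets `K n` (σ-compactness); by minimality finitely many
translates of `K n` land in the ball of radius `1 / (n + 1)` about a fixed point `p`, and `C` is
`p` together with all these pieces: as the pieces shrink to `p` the set is closed, and being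
meagre it is nowhere dense by Baire. So if `Q • M = X`, then `(Q * T) • C = X` with `T`
countable, and `#(Q * T) ≤ #Q` because `Q` is infinite (`X` itself is not meagre).
-/

open Set Topology Cardinal

/-- `cov_α`: the least cardinality of a set `Q ⊆ G` such that the `Q`-translates of some
closed nowhere dense set `C ⊆ X` cover `X`. -/
noncomputable def covAction {G X : Type*} [TopologicalSpace X] (α : G → X → X) : Cardinal :=
  sInf {κ | ∃ (Q : Set G) (C : Set X), κ = #Q ∧ IsClosed C ∧ IsNowhereDense C ∧
    (⋃ q ∈ Q, α q '' C) = Set.univ}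

/-- `cov*_α`: the least cardinality of a set `Q ⊆ G` such that the `Q`-translates of some
meagre set `M ⊆ X` cover `X`. -/
noncomputable def covActionStar {G X : Type*} [TopologicalSpace X] (α : G → X → X) : Cardinal :=
  sInf {κ | ∃ (Q : Set G) (M : Set X), κ = #Q ∧ IsMeagre M ∧
    (⋃ q ∈ Q, α q '' M) = Set.univ}

open Filter Metric
open scoped Pointwise

lemma csInf_eq_csInf_of_subset_of_forall_exists_le {α : Type*}
    [ConditionallyCompleteLinearOrderBot α] {s t : Set α} (hst : s ⊆ t)
    (h : ∀ b ∈ t, ∃ a ∈ s, a ≤ b) : sInf s = sInf t := by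
  rcases t.eq_empty_or_nonempty with rfl | ht
  · rw [subset_empty_iff.1 hst]
  obtain ⟨b, hb⟩ := ht
  obtain ⟨a, ha, -⟩ := h b hb
  refine le_antisymm (le_csInf ⟨b, hb⟩ fun b hb => ?_)
    (csInf_le_csInf (OrderBot.bddBelow _) ⟨a, ha⟩ hst)
  obtain ⟨a, ha, hab⟩ := h b hb
  exact (csInf_le (OrderBot.bddBelow _) ha).trans hab

section Meagre

variable {X : Type*} [TopologicalSpace X]

lemma IsMeagre.isNowhereDense_of_isClosed [BaireSpace X] {C : Set X} (hC : IsMeagre C)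
    (hCc : IsClosed C) : IsNowhereDense C := by
  rw [hCc.isNowhereDense_iff, interior_eq_empty_iff_dense_compl]
  exact dense_of_mem_residual hC

lemma isNowhereDense_singleton [T1Space X] {x : X} (hx : ¬IsOpen ({x} : Set X)) :
    IsNowhereDense ({x} : Set X) := by
  rw [isClosed_singleton.isNowhereDense_iff]
  rcases subset_singleton_iff_eq.1 (interior_subset (s := {x})) with h | h
  · exact h
  · exact absurd (h ▸ isOpen_interior) hx

lemma IsMeagre.exists_subset_iUnion_isCompact_isNowhereDense [SigmaCompactSpace X]
    {M : Set X} (hM : IsMeagre M) :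
    ∃ K : ℕ → Set X, (∀ n, IsCompact (K n)) ∧ (∀ n, IsNowhereDense (K n)) ∧ M ⊆ ⋃ n, K n := by
  obtain ⟨S, hSnwd, hScount, hMS⟩ := isMeagre_iff_countable_union_isNowhereDense.1 hM
  -- adding `∅` makes the family nonempty, so that it can be enumerated
  obtain ⟨f, hf⟩ := (hScount.insert ∅).exists_eq_range (insert_nonempty _ _)
  have hfnwd : ∀ n, IsNowhereDense (f n) := fun n => by
    rcases (hf ▸ mem_range_self n : f n ∈ insert ∅ S) with h | h
    · exact h ▸ isNowhereDense_empty
    · exact hSnwd _ h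
  refine ⟨fun n => closure (f n.unpair.1) ∩ compactCovering X n.unpair.2,
    fun n => (isCompact_compactCovering X _).inter_left isClosed_closure,
    fun n => (hfnwd _).closure.mono inter_subset_left, fun x hx => ?_⟩
  obtain ⟨s, hs, hxs⟩ := mem_sUnion.1 (hMS hx)
  obtain ⟨a, rfl⟩ : s ∈ range f := hf ▸ mem_insert_of_mem ∅ hs
  obtain ⟨m, hm⟩ := mem_iUnion.1 (iUnion_compactCovering X ▸ mem_univ x)
  exact mem_iUnion.2 ⟨Nat.pair a m, by simpa using ⟨subset_closure hxs, hm⟩⟩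

end Meagre

lemma isClosed_insert_iUnion_of_subset_closedBall {X : Type*} [MetricSpace X] {p : X}
    {D : ℕ → Set X} {r : ℕ → ℝ} (hD : ∀ n, IsClosed (D n)) (hr : Tendsto r atTop (𝓝 0))
    (hDr : ∀ n, D n ⊆ closedBall p (r n)) : IsClosed (insert p (⋃ n, D n)) := by
  refine isClosed_of_closure_subset fun x hx => ?_
  by_cases hxp : x = p
  · exact Or.inl hxp
  have hδ : 0 < dist x p / 2 := half_pos (dist_pos.2 hxp)
  obtain ⟨N, hN⟩ := eventually_atTop.1 (hr.eventually (gt_mem_nhds hδ))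
  have hsplit :
      insert p (⋃ n, D n) ⊆ (⋃ n ∈ Finset.range N, D n) ∪ closedBall p (dist x p / 2) := by
    rintro y (rfl | hy)
    · exact Or.inr (mem_closedBall_self hδ.le)
    obtain ⟨n, hn⟩ := mem_iUnion.1 hy
    rcases lt_or_ge n N with hnN | hnN
    · exact Or.inl (mem_biUnion (Finset.mem_range.2 hnN) hn)
    · exact Or.inr (closedBall_subset_closedBall (hN n hnN).le (hDr n hn))
  have hclosed : IsClosed ((⋃ n ∈ Finset.range N, D n) ∪ closedBall p (dist x p / 2)) :=
    (isClosed_biUnion_finset fun n _ => hD n).union isClosed_closedBall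
  rcases hclosed.closure_subset_iff.2 hsplit hx with h | h
  · obtain ⟨n, -, hn⟩ := mem_iUnion₂.1 h
    exact Or.inr (mem_iUnion.2 ⟨n, hn⟩)
  · have : dist x p ≤ dist x p / 2 := h
    linarith

section Action

variable {G X : Type*} [Group G] [TopologicalSpace X] [MulAction G X] [ContinuousConstSMul G X]

lemma IsNowhereDense.smul {s : Set X} (hs : IsNowhereDense s) (g : G) :
    IsNowhereDense (g • s) :=
  (Homeomorph.smul g).isInducing.isNowhereDense_image hs

lemma IsMeagre.smul {s : Set X} (hs : IsMeagre s) (g : G) : IsMeagre (g • s) :=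
  (Homeomorph.smul g).isInducing.isMeagre_image hs

lemma aleph0_le_mk_of_smul_eq_univ [BaireSpace X] [Nonempty X] {Q : Set G} {M : Set X}
    (hM : IsMeagre M) (hQM : Q • M = Set.univ) : ℵ₀ ≤ #Q := by
  by_contra! hQ
  have hmeagre : IsMeagre (Q • M) := by
    rw [← iUnion_smul_left_image]
    exact isMeagre_biUnion (lt_aleph0_iff_set_finite.1 hQ).countable fun q _ => hM.smul q
  exact not_isMeagre_of_isOpen isOpen_univ univ_nonempty (hQM ▸ hmeagre)

end Action

lemma IsMeagre.exists_subset_countable_smul_isClosed_isNowhereDense {G X : Type*} [Group G]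
    [MetricSpace X] [BaireSpace X] [SigmaCompactSpace X] [Nonempty X] [MulAction G X]
    [ContinuousConstSMul G X] [MulAction.IsMinimal G X] (hni : ∀ x : X, ¬IsOpen ({x} : Set X))
    {M : Set X} (hM : IsMeagre M) :
    ∃ C : Set X, IsClosed C ∧ IsNowhereDense C ∧ ∃ T : Set G, T.Countable ∧ M ⊆ T • C := by
  obtain ⟨K, hKc, hKnwd, hMK⟩ := hM.exists_subset_iUnion_isCompact_isNowhereDense
  let p : X := Classical.arbitrary X
  let r : ℕ → ℝ := fun n => 1 / (n + 1)
  have hr : ∀ n, 0 < r n := fun n => Nat.one_div_pos_of_nat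
  choose I hI using fun n => (hKc n).exists_finite_cover_smul G isOpen_ball
    (nonempty_ball.2 (hr n) : (ball p (r n)).Nonempty)
  let D : ℕ → Set X := fun n => ⋃ g ∈ I n, (g⁻¹ • K n ∩ closedBall p (r n))
  let C : Set X := insert p (⋃ n, D n)
  have hCc : IsClosed C := by
    refine isClosed_insert_iUnion_of_subset_closedBall (fun n => ?_)
      tendsto_one_div_add_atTop_nhds_zero_nat fun n => iUnion₂_subset fun _ _ => inter_subset_right
    exact isClosed_biUnion_finset fun g _ => ((hKc n).smul g⁻¹).isClosed.inter isClosed_closedBall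
  have hCm : IsMeagre C := by
    refine (isNowhereDense_singleton (hni p)).isMeagre.union (isMeagre_iUnion fun n => ?_)
    refine isMeagre_biUnion (I n).countable_toSet fun g _ => ?_
    exact (((hKnwd n).smul g⁻¹).mono inter_subset_left).isMeagre
  refine ⟨C, hCc, hCm.isNowhereDense_of_isClosed hCc, ⋃ n, (I n : Set G),
    countable_iUnion fun n => (I n).countable_toSet, fun x hx => ?_⟩
  obtain ⟨n, hxn⟩ := mem_iUnion.1 (hMK hx)
  obtain ⟨g, hg, y, hy, rfl⟩ : ∃ g ∈ I n, x ∈ g • ball p (r n) := by simpa using hI n hxn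
  have hyD : y ∈ D n := mem_biUnion hg
    ⟨⟨g • y, hxn, inv_smul_smul g y⟩, ball_subset_closedBall hy⟩
  exact smul_mem_smul (mem_iUnion.2 ⟨n, hg⟩) (Or.inr (mem_iUnion.2 ⟨n, hyD⟩))

section Cov

variable {G X : Type*} [Group G] [MetricSpace X] [BaireSpace X] [SigmaCompactSpace X]
  [MulAction G X] [ContinuousConstSMul G X] [MulAction.IsMinimal G X]

lemma exists_isClosed_isNowhereDense_smul_eq_univ_of_isMeagre
    (hni : ∀ x : X, ¬IsOpen ({x} : Set X)) {Q : Set G} {M : Set X} (hM : IsMeagre M)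
    (hQM : Q • M = Set.univ) :
    ∃ Q' : Set G, #Q' ≤ #Q ∧ ∃ C : Set X, IsClosed C ∧ IsNowhereDense C ∧ Q' • C = Set.univ := by
  cases isEmpty_or_nonempty X
  · exact ⟨Q, le_rfl, ∅, isClosed_empty, isNowhereDense_empty, Subsingleton.elim _ _⟩
  obtain ⟨C, hCc, hCnwd, T, hT, hMT⟩ :=
    hM.exists_subset_countable_smul_isClosed_isNowhereDense (G := G) hni
  refine ⟨Q * T, ?_, C, hCc, hCnwd, eq_univ_of_univ_subset ?_⟩
  · calc #(Q * T : Set G) ≤ #Q * #T := mk_mul_le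
      _ ≤ #Q * ℵ₀ := by gcongr; exact mk_le_aleph0_iff.2 hT.to_subtype
      _ = #Q := mul_aleph0_eq (aleph0_le_mk_of_smul_eq_univ hM hQM)
  · calc Set.univ = Q • M := hQM.symm
      _ ⊆ Q • (T • C) := smul_subset_smul_left hMT
      _ = (Q * T) • C := (mul_smul Q T C).symm

theorem covAction_smul_eq_covActionStar_smul (hni : ∀ x : X, ¬IsOpen ({x} : Set X)) :
    covAction (fun (g : G) (x : X) => g • x) = covActionStar (fun (g : G) (x : X) => g • x) := by
  simp only [covAction, covActionStar, image_smul, iUnion_smul_left_image]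
  refine csInf_eq_csInf_of_subset_of_forall_exists_le ?_ ?_
  · rintro _ ⟨Q, C, rfl, -, hC, hQC⟩
    exact ⟨Q, C, rfl, hC.isMeagre, hQC⟩
  · rintro _ ⟨Q, M, rfl, hM, hQM⟩
    obtain ⟨Q', hQ', C, hCc, hCnwd, hQ'C⟩ :=
      exists_isClosed_isNowhereDense_smul_eq_univ_of_isMeagre hni hM hQM
    exact ⟨#Q', ⟨Q', C, rfl, hCc, hCnwd, hQ'C⟩, hQ'⟩

end Cov

theorem covAction_eq_covActionStar_general
    {G X : Type*} [Group G] [TopologicalSpace X] [PolishSpace X]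
    [SigmaCompactSpace X]
    (hni : ∀ x : X, ¬ IsOpen ({x} : Set X))
    (α : G → X → X)
    (hone : ∀ x, α 1 x = x)
    (hmul : ∀ g h x, α (g * h) x = α g (α h x))
    (hcont : ∀ g, Continuous (α g))
    (horb : ∀ x : X, Dense (Set.range fun g => α g x)) :
    covAction α = covActionStar α := by
  let := TopologicalSpace.upgradeIsCompletelyMetrizable X
  let : MulAction G X := { smul := α, one_smul := hone, mul_smul := hmul }
  have : ContinuousConstSMul G X := ⟨hcont⟩
  have : MulAction.IsMinimal G X := ⟨horb⟩
  exact covAction_smul_eq_covActionStar_smul hni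

/-- for a group action on a σ-compact, second countable Polish space
with no isolated points, all orbits dense and each `α g` continuous,
`cov_α = cov*_α`. -/
theorem covAction_eq_covActionStar
    {G X : Type*} [Group G] [TopologicalSpace X] [PolishSpace X]
    [SigmaCompactSpace X] [SecondCountableTopology X]
    (hni : ∀ x : X, ¬ IsOpen ({x} : Set X))
    (α : G → X → X)
    (hone : ∀ x, α 1 x = x)
    (hmul : ∀ g h x, α (g * h) x = α g (α h x))
    (hcont : ∀ g, Continuous (α g))
    (horb : ∀ x : X, Dense (Set.range fun g => α g x)) :
    covAction α = covActionStar α :=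
  covAction_eq_covActionStar_general hni α hone hmul hcont horb
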